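/- arXiv:2206.10091 — 2 statements merged into one kernel-verified Lean document; each statement's English description precedes it below -/
import Mathlib

section
/- Let g = sl(2,ℝ) with basis e₁, e₂, e₃ satisfying [e₁,e₂] = 2e₂, [e₁,e₃] = −2e₃, [e₂,e₃] = e₁, and let g* carry the Lie bracket [e¹,e²]_* = (1/2)e², [e¹,e³]_* = −(1/2)e³, [e²,e³]_* = e¹. With τ = τ̄ e₁∧e₂∧e₃ and φ = φ̄ e¹∧e²∧e³ where τ̄φ̄ = 1, the quadruple (g, g*, τ, φ) is a proto-bialgebra, and its characteristic function equals −τ̄φ̄ = −1. -/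
set_option maxHeartbeats 2000000


noncomputable section

open Finset

namespace Dim3

/-- The underlying 3-dimensional vector space. -/
abbrev V := Fin 3 → ℝ

/-- The bracket on `ℝ³` determined by structure constants `c`:
`[e_i, e_j] = Σ_k (c i j k) e_k`. -/
def brk (c : Fin 3 → Fin 3 → Fin 3 → ℝ) (x y : V) : V :=
  fun k => ∑ i, ∑ j, x i * y j * c i j k

/-- The Jacobi identity for the bracket with structure constants `c`. -/
def Jacobi (c : Fin 3 → Fin 3 → Fin 3 → ℝ) : Prop :=
  ∀ x y z : V, brk c (brk c x y) z + brk c (brk c y z) x + brk c (brk c z x) y = 0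

/-- A bivector is recorded through its skew-symmetric array of components
`w = (1/2) w^{pq} e_p ∧ e_q`. -/
abbrev Bi := Fin 3 → Fin 3 → ℝ

/-- The biderivation extension `[x, y∧z] = [x,y]∧z + y∧[x,z]` of the bracket to
bivectors, in components. -/
def brkBi (c : Fin 3 → Fin 3 → Fin 3 → ℝ) (x : V) (w : Bi) : Bi :=
  fun p q => (∑ i, ∑ j, x i * c i j p * w j q) + (∑ i, ∑ j, x i * c i j q * w p j)

/-- The differential `d_* : g → ∧²g` of the dual bracket with structure constants `b`
(`[e^j, e^k]_* = Σ_i (b j k i) e^i`), i.e. `d_*(e_i) = −(1/2) b_i^{jk} e_j∧e_k`;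
in components `(d_* x)^{jk} = −Σ_i (b j k i) (x i)`. -/
def dstar (b : Fin 3 → Fin 3 → Fin 3 → ℝ) (x : V) : Bi :=
  fun j k => -∑ i, b j k i * x i

/-- The Levi-Civita symbol on three indices. -/
def lev (i j k : Fin 3) : ℝ :=
  (((j : ℝ) - (i : ℝ)) * ((k : ℝ) - (i : ℝ)) * ((k : ℝ) - (j : ℝ))) / 2

/-- The correction term `ι_{ι_y ι_x φ} τ ∈ ∧²g` with `τ = τ̄ e₁∧e₂∧e₃` and
`φ = φ̄ e¹∧e²∧e³`, in components. -/
def corr (tb fb : ℝ) (x y : V) : Bi :=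
  fun p q => tb * fb * ∑ r, (∑ p', ∑ q', x p' * y q' * lev p' q' r) * lev r p q

/-- The compatibility axiom
`d_*([x,y]) = [d_*x, y] + [x, d_*y] + ι_{ι_yι_xφ}τ` of a (3-dimensional)
proto-bialgebra, where `[d_*x, y] = −[y, d_*x]`. -/
def Compat (a b : Fin 3 → Fin 3 → Fin 3 → ℝ) (tb fb : ℝ) : Prop :=
  ∀ (x y : V) (p q : Fin 3),
    dstar b (brk a x y) p q =
      -(brkBi a y (dstar b x) p q) + brkBi a x (dstar b y) p q + corr tb fb x y p q

/-- The modular element `ξ₀ = a_{ij}^j e^i`. -/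
def xi0 (a : Fin 3 → Fin 3 → Fin 3 → ℝ) : V := fun i => ∑ j, a i j j

/-- The modular element `X₀ = b_j^{ij} e_i`. -/
def X0 (b : Fin 3 → Fin 3 → Fin 3 → ℝ) : V := fun i => ∑ j, b i j j

/-- The characteristic function `(1/4)⟨ξ₀|X₀⟩ − (1/2)∂(X₀) − ⟨τ|φ⟩`, where
`∂(X₀) = Σ_i X₀^i ξ₀_i` and `⟨τ|φ⟩ = τ̄ φ̄`. -/
def charFn (a b : Fin 3 → Fin 3 → Fin 3 → ℝ) (tb fb : ℝ) : ℝ :=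
  (1 / 4 : ℝ) * (∑ i, xi0 a i * X0 b i) - (1 / 2 : ℝ) * (∑ i, X0 b i * xi0 a i)
    - tb * fb

/-- Structure constants of `sl(2,ℝ)`: `[e₁,e₂] = 2e₂`, `[e₁,e₃] = −2e₃`, `[e₂,e₃] = e₁`. -/
def sl2 : Fin 3 → Fin 3 → Fin 3 → ℝ :=
  ![![![0, 0, 0], ![0, 2, 0], ![0, 0, -2]],
    ![![0, -2, 0], ![0, 0, 0], ![1, 0, 0]],
    ![![0, 0, 2], ![-1, 0, 0], ![0, 0, 0]]]

/-- Structure constants of the dual bracket: `[e¹,e²]_* = (1/2)e²`,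
`[e¹,e³]_* = −(1/2)e³`, `[e²,e³]_* = e¹`. -/
def dual2 : Fin 3 → Fin 3 → Fin 3 → ℝ :=
  ![![![0, 0, 0], ![0, 1/2, 0], ![0, 0, -1/2]],
    ![![0, -1/2, 0], ![0, 0, 0], ![1, 0, 0]],
    ![![0, 0, 1/2], ![-1, 0, 0], ![0, 0, 0]]]

end Dim3

open Dim3 in
/-- Let `g = sl(2,ℝ)` with `[e₁,e₂] = 2e₂`, `[e₁,e₃] = −2e₃`,
`[e₂,e₃] = e₁`, and let `g*` carry the Lie bracket `[e¹,e²]_* = (1/2)e²`,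
`[e¹,e³]_* = −(1/2)e³`, `[e²,e³]_* = e¹`.  With `τ = τ̄ e₁∧e₂∧e₃` and
`φ = φ̄ e¹∧e²∧e³` where `τ̄ φ̄ = 1`, the quadruple `(g, g*, τ, φ)` is a
proto-bialgebra (both brackets satisfy the Jacobi identity and the compatibility
condition holds), and its characteristic function equals `−τ̄ φ̄ = −1`. -/
theorem sl2_proto_bialgebra (tb fb : ℝ) (h : tb * fb = 1) :
    Jacobi sl2 ∧ Jacobi dual2 ∧ Compat sl2 dual2 tb fb ∧
      charFn sl2 dual2 tb fb = -(tb * fb) ∧ charFn sl2 dual2 tb fb = -1 := by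
  refine ⟨?_, ?_, ?_, ?_, ?_⟩
  · intro x y z
    funext k
    fin_cases k <;>
      simp [brk, sl2, Fin.sum_univ_three, Matrix.vecHead, Matrix.vecTail, Function.comp] <;> ring
  · intro x y z
    funext k
    fin_cases k <;>
      simp [brk, dual2, Fin.sum_univ_three, Matrix.vecHead, Matrix.vecTail, Function.comp] <;> ring
  · intro x y p q
    have htb : tb ≠ 0 := left_ne_zero_of_mul_eq_one h
    have hfb : fb = tb⁻¹ := eq_inv_of_mul_eq_one_right h
    subst hfb
    fin_cases p <;> fin_cases q <;>
      simp [dstar, brk, brkBi, corr, lev, sl2, dual2, Fin.sum_univ_three,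
        Matrix.vecHead, Matrix.vecTail, Function.comp] <;>
      field_simp <;> ring
  · simp [charFn, xi0, X0, sl2, dual2, Fin.sum_univ_three, Matrix.vecHead, Matrix.vecTail, Function.comp]
  · simp [charFn, xi0, X0, sl2, dual2, Fin.sum_univ_three, Matrix.vecHead, Matrix.vecTail, Function.comp, h]

end
end

section
/- Let g = sl(2,ℝ) with standard basis relations [e₁,e₂] = 2e₂, [e₁,e₃] = −2e₃, [e₂,e₃] = e₁, and suppose g* carries a Lie bracket with structure constants b_k^{ij} making (g, g*, τ, φ) a proto-bialgebra for some nonzero τ̄, φ̄ with b₁²³ = τ̄φ̄ ≠ 0. Then necessarily b₁²³ = 2b₂¹² = 2b₃³¹ = τ̄φ̄ and all other structure constants b₁¹², b₁³¹, b₂²³, b₂³¹, b₃¹², b₃²³ vanish. -/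
noncomputable section

open Finset

open Dim3 in
/-- Let `g = sl(2,ℝ)` with the standard relations, and suppose `g*`
carries a Lie bracket with structure constants `b_k^{ij}` making `(g, g*, τ, φ)` a
proto-bialgebra for some nonzero `τ̄`, `φ̄` with `b₁²³ = τ̄φ̄ ≠ 0`.  Then necessarily
`b₁²³ = 2b₂¹² = 2b₃³¹ = τ̄φ̄` and all the other structure constants
`b₁¹², b₁³¹, b₂²³, b₂³¹, b₃¹², b₃²³` vanish.

(Indices: `b_k^{ij}` is `b i j k` with `e¹,e²,e³` indexed by `0,1,2`.) -/
theorem sl2_proto_bialgebra_constraints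
    (b : Fin 3 → Fin 3 → Fin 3 → ℝ) (tb fb : ℝ)
    (hskew : ∀ i j k, b i j k = -b j i k)
    (hjacobi : Jacobi b)
    (hcompat : Compat sl2 b tb fb)
    (hne : tb * fb ≠ 0)
    (hb : b 1 2 0 = tb * fb) :
    b 1 2 0 = 2 * b 0 1 1 ∧ b 1 2 0 = 2 * b 2 0 2 ∧
      b 0 1 0 = 0 ∧ b 2 0 0 = 0 ∧ b 1 2 1 = 0 ∧
      b 2 0 1 = 0 ∧ b 0 1 2 = 0 ∧ b 1 2 2 = 0 := by

  have hd : ∀ i k, b i i k = 0 := fun i k => by have := hskew i i k; linarith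
  -- compatibility equations at basis vectors
  have c1 := hcompat ![1,0,0] ![0,1,0] 0 2
  have c2 := hcompat ![1,0,0] ![0,1,0] 1 2
  have c3 := hcompat ![1,0,0] ![0,0,1] 0 1
  have c4 := hcompat ![1,0,0] ![0,0,1] 1 2
  have c5 := hcompat ![0,1,0] ![0,0,1] 1 2
  simp [dstar, brk, brkBi, corr, sl2, lev, Fin.sum_univ_three, hd, Matrix.vecHead, Matrix.vecTail,
    hskew 1 0, hskew 2 0, hskew 2 1] at c1 c2 c3 c4 c5
  -- Jacobi identity at basis vectors
  have j0 := congrFun (hjacobi ![1,0,0] ![0,1,0] ![0,0,1]) 0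
  have j1 := congrFun (hjacobi ![1,0,0] ![0,1,0] ![0,0,1]) 1
  have j2 := congrFun (hjacobi ![1,0,0] ![0,1,0] ![0,0,1]) 2
  simp [brk, Fin.sum_univ_three, hd, Matrix.vecHead, Matrix.vecTail, hskew 1 0, hskew 2 0, hskew 2 1] at j0 j1 j2
  -- derived identities
  have h021 : b 0 2 1 = 0 := by linarith
  have h012 : b 0 1 2 = 0 := by linarith
  have hdiff : b 0 1 1 - b 0 2 2 = tb * fb := by linarith
  have hsum : b 0 1 1 + b 0 2 2 = 0 := by
    have : (b 0 1 1 + b 0 2 2) * (tb * fb) = 0 := by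
      linear_combination j0 - (b 0 1 1 + b 0 2 2) * hb + (b 0 1 0 / 2) * c2 + (b 0 2 0 / 2) * c4
    exact (mul_eq_zero.mp this).resolve_right hne
  have h020 : b 0 2 0 = 0 := by
    have : b 0 2 0 * (tb * fb) = 0 := by
      linear_combination (-1 : ℝ) * j1 + (b 0 1 0 - b 1 2 2) * h021 + (b 0 2 2 / 2) * c2 - b 0 2 0 * hdiff
    exact (mul_eq_zero.mp this).resolve_right hne
  have h010 : b 0 1 0 = 0 := by
    have : b 0 1 0 * (tb * fb) = 0 := by
      linear_combination (-1 : ℝ) * j2 - (b 1 2 1 + b 0 2 0) * h012 + (b 0 1 1 / 2) * c4 - b 0 1 0 * hdiff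
    exact (mul_eq_zero.mp this).resolve_right hne
  refine ⟨by linarith, ?_, h010, ?_, by linarith, ?_, h012, by linarith⟩
  · rw [hskew 2 0]; linarith
  · rw [hskew 2 0]; linarith
  · rw [hskew 2 0]; linarith


end
end
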